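/- arXiv:1303.6406 — 2 statements merged into one kernel-verified Lean document; each statement's English description precedes it below -/
import Mathlib

section
/- Assume d ≤ 2, i.e., (α,α)/(β,β) ≤ 2 for all α, β ∈ Δ. Then Σ_{α ∈ Δ, α short} ℤ α^∨ + 2Q^∨ = Σ_{α ∈ Π, α short} ℤ α^∨ + 2Q^∨; that is, modulo 2Q^∨ the lattice generated by all short coroots is already generated by the short simple coroots. -/
open scoped Pointwise

namespace ZetaCenter

variable {V : Type*} [AddCommGroup V] [Module ℚ V]

/-- The coroot `α^∨ = 2α/(α,α)` of a vector `α` with respect to a bilinear form. -/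
noncomputable def coroot (B : V →ₗ[ℚ] V →ₗ[ℚ] ℚ) (α : V) : V :=
  (2 / B α α) • α

/-- `Δ` is a (crystallographic-style) root system in `V` with respect to `B`:
finite, not containing `0`, spanning `V`, and closed under the reflections `s_α`. -/
def IsRootSystem (B : V →ₗ[ℚ] V →ₗ[ℚ] ℚ) (Δ : Set V) : Prop :=
  Δ.Finite ∧ (0 : V) ∉ Δ ∧ Submodule.span ℚ Δ = ⊤ ∧
    ∀ α ∈ Δ, ∀ β ∈ Δ, β - B β (coroot B α) • α ∈ Δ

/-- Crystallographic condition: all pairings `(β, α^∨)` are integers. -/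
def IsCrystallographic (B : V →ₗ[ℚ] V →ₗ[ℚ] ℚ) (Δ : Set V) : Prop :=
  ∀ α ∈ Δ, ∀ β ∈ Δ, ∃ n : ℤ, B β (coroot B α) = n

/-- Reducedness: the only multiples of a root that are roots are `±` itself. -/
def IsReduced (Δ : Set V) : Prop :=
  ∀ α ∈ Δ, ∀ c : ℚ, c • α ∈ Δ → c = 1 ∨ c = -1

/-- Irreducibility: `Δ` admits no decomposition into two orthogonal nonempty parts. -/
def IsIrreducible (B : V →ₗ[ℚ] V →ₗ[ℚ] ℚ) (Δ : Set V) : Prop :=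
  Δ.Nonempty ∧ ∀ Δ₁ Δ₂ : Set V, Δ = Δ₁ ∪ Δ₂ →
    (∀ α ∈ Δ₁, ∀ β ∈ Δ₂, B α β = 0) → Δ₁ = ∅ ∨ Δ₂ = ∅

/-- The Weyl group of `Δ`: the subgroup of `GL(V)` generated by the reflections `s_α`, `α ∈ Δ`. -/
def weylGroup (B : V →ₗ[ℚ] V →ₗ[ℚ] ℚ) (Δ : Set V) : Subgroup (V ≃ₗ[ℚ] V) :=
  Subgroup.closure {w | ∃ α ∈ Δ, ∀ v : V, w v = v - B v (coroot B α) • α}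

/-- `Pi` is a base (set of simple roots) of `Δ`: a linearly independent subset such that every
root is a nonnegative-integral or nonpositive-integral combination of elements of `Pi`. -/
def IsBase (Δ Pi : Set V) : Prop :=
  Pi ⊆ Δ ∧ LinearIndependent ℚ ((↑) : Pi → V) ∧
    ∀ α ∈ Δ, α ∈ AddSubmonoid.closure Pi ∨ -α ∈ AddSubmonoid.closure Pi

/-- The positive system corresponding to the base `Pi`. -/
def positiveRoots (Δ Pi : Set V) : Set V :=
  {α | α ∈ Δ ∧ α ∈ AddSubmonoid.closure Pi}

/-- `β` is a short root of `Δ`. -/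
def IsShort (B : V →ₗ[ℚ] V →ₗ[ℚ] ℚ) (Δ : Set V) (β : V) : Prop :=
  β ∈ Δ ∧ ∀ γ ∈ Δ, B β β ≤ B γ γ

/-- The lattice `{λ ∈ V : (λ, α^∨) ∈ c(α)·ℤ for all α ∈ Δ}`. -/
noncomputable def scaledWeightLattice (B : V →ₗ[ℚ] V →ₗ[ℚ] ℚ) (Δ : Set V) (c : V → ℚ) :
    AddSubgroup V where
  carrier := {lam | ∀ α ∈ Δ, ∃ n : ℤ, B lam (coroot B α) = c α * n}
  zero_mem' := fun α _ => ⟨0, by simp⟩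
  add_mem' := by
    intro x y hx hy α hα
    obtain ⟨m, hm⟩ := hx α hα
    obtain ⟨k, hk⟩ := hy α hα
    exact ⟨m + k, by rw [map_add, LinearMap.add_apply, hm, hk]; push_cast; ring⟩
  neg_mem' := by
    intro x hx α hα
    obtain ⟨m, hm⟩ := hx α hα
    exact ⟨-m, by rw [map_neg, LinearMap.neg_apply, hm]; push_cast; ring⟩

/-- The weight lattice `P` of `Δ`. -/
noncomputable def weightLattice (B : V →ₗ[ℚ] V →ₗ[ℚ] ℚ) (Δ : Set V) : AddSubgroup V :=
  scaledWeightLattice B Δ fun _ => 1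

/-- The coroot lattice `Q^∨` of `Δ`. -/
noncomputable def corootLattice (B : V →ₗ[ℚ] V →ₗ[ℚ] ℚ) (Δ : Set V) : AddSubgroup V :=
  AddSubgroup.closure (coroot B '' Δ)

/-!
A positive short root `α` that is not simple pairs positively with some simple root `p`, and the
reflection `s_p` keeps it short while lowering its height, with
`α^∨ = (s_p α)^∨ + ⟨p, α^∨⟩ p^∨`. If `p` is short, `p^∨` is one of the generators; if `p` is long,
`d ≤ 2` forces `⟨p, α^∨⟩ = 2`, so the correction lies in `2Q^∨`. Induction on the height then
reaches every short coroot modulo `2Q^∨`.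
-/

section Height

variable {Pi : Set V} {f : V →ₗ[ℚ] ℚ} {x : V}

theorem exists_linearMap_eq_one_of_linearIndepOn (hPi : LinearIndepOn ℚ id Pi) :
    ∃ f : V →ₗ[ℚ] ℚ, ∀ p ∈ Pi, f p = 1 := by
  classical
  refine ⟨(Module.Basis.extend hPi).constr ℚ fun i => if (i : V) ∈ Pi then 1 else 0,
    fun p hp => ?_⟩
  have hbp : Module.Basis.extend hPi ⟨p, hPi.subset_extend _ hp⟩ = p :=
    Module.Basis.extend_apply_self hPi _
  rw [← hbp, Module.Basis.constr_basis]
  simp [hp]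

theorem exists_nat_eq_of_mem_closure (hf : ∀ p ∈ Pi, f p = 1)
    (hx : x ∈ AddSubmonoid.closure Pi) : ∃ n : ℕ, f x = n := by
  induction hx using AddSubmonoid.closure_induction with
  | mem p hp => exact ⟨1, by simp [hf p hp]⟩
  | zero => exact ⟨0, by simp⟩
  | add y z _ _ hy hz =>
    obtain ⟨a, ha⟩ := hy
    obtain ⟨b, hb⟩ := hz
    exact ⟨a + b, by simp [ha, hb]⟩

theorem exists_nat_abs_eq (hf : ∀ p ∈ Pi, f p = 1)
    (hx : x ∈ AddSubmonoid.closure Pi ∨ -x ∈ AddSubmonoid.closure Pi) :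
    ∃ n : ℕ, |f x| = n := by
  rcases hx with hx | hx <;> obtain ⟨n, hn⟩ := exists_nat_eq_of_mem_closure hf hx
  · exact ⟨n, by rw [hn, Nat.abs_cast]⟩
  · exact ⟨n, by rw [← abs_neg, ← map_neg, hn, Nat.abs_cast]⟩

theorem eq_zero_or_mem_of_mem_closure_of_lt_two (hf : ∀ p ∈ Pi, f p = 1)
    (hx : x ∈ AddSubmonoid.closure Pi) (hlt : f x < 2) : x = 0 ∨ x ∈ Pi := by
  induction hx using AddSubmonoid.closure_induction with
  | mem p hp => exact Or.inr hp
  | zero => exact Or.inl rfl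
  | add y z hy hz ihy ihz =>
    obtain ⟨a, ha⟩ := exists_nat_eq_of_mem_closure hf hy
    obtain ⟨b, hb⟩ := exists_nat_eq_of_mem_closure hf hz
    have ha0 : (0 : ℚ) ≤ a := a.cast_nonneg
    have hb0 : (0 : ℚ) ≤ b := b.cast_nonneg
    rw [map_add, ha, hb] at hlt
    rcases ihy (by linarith) with rfl | hyPi <;> rcases ihz (by linarith) with rfl | hzPi
    · simp
    · simpa using Or.inr hzPi
    · simpa using Or.inr hyPi
    · rw [← ha, ← hb, hf y hyPi, hf z hzPi] at hlt
      norm_num at hlt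

theorem exists_pos_of_mem_closure (g : V →ₗ[ℚ] ℚ) (hx : x ∈ AddSubmonoid.closure Pi)
    (hgx : 0 < g x) : ∃ p ∈ Pi, 0 < g p := by
  by_contra! hg
  have hle : ∀ y ∈ AddSubmonoid.closure Pi, g y ≤ 0 := fun y hy => by
    induction hy using AddSubmonoid.closure_induction with
    | mem p hp => exact hg p hp
    | zero => simp
    | add y z _ _ hy hz => rw [map_add]; linarith
  exact (hle x hx).not_gt hgx

end Height

section Reflection

variable {B : V →ₗ[ℚ] V →ₗ[ℚ] ℚ} {α p : V}

noncomputable def reflect (B : V →ₗ[ℚ] V →ₗ[ℚ] ℚ) (p v : V) : V :=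
  v - B v (coroot B p) • p

theorem coroot_neg (α : V) : coroot B (-α) = -coroot B α := by
  simp [coroot]

theorem apply_coroot_self (hp : B p p ≠ 0) : B p (coroot B p) = 2 := by
  simp only [coroot, map_smul, smul_eq_mul]
  field_simp

theorem reflect_self (hp : B p p ≠ 0) : reflect B p p = -p := by
  rw [reflect, apply_coroot_self hp]
  module

theorem apply_reflect_reflect (hsymm : ∀ x y : V, B x y = B y x) (hp : B p p ≠ 0) (v : V) :
    B (reflect B p v) (reflect B p v) = B v v := by
  simp only [reflect, coroot, map_sub, map_smul, LinearMap.sub_apply, LinearMap.smul_apply,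
    smul_eq_mul, hsymm p v]
  field_simp
  ring

theorem coroot_reflect (hsymm : ∀ x y : V, B x y = B y x) (hp : B p p ≠ 0) (v : V) :
    coroot B (reflect B p v) = coroot B v - B p (coroot B v) • coroot B p := by
  rw [coroot, apply_reflect_reflect hsymm hp]
  simp only [reflect, coroot, map_smul, smul_eq_mul, hsymm p v, smul_sub, smul_smul]
  congr 2
  ring

theorem pairing_mul_apply_self (hsymm : ∀ x y : V, B x y = B y x) (hα : B α α ≠ 0)
    (hp : B p p ≠ 0) : B p (coroot B α) * B α α = B α (coroot B p) * B p p := by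
  simp only [coroot, map_smul, smul_eq_mul, hsymm p α]
  field_simp

end Reflection

section RootSystem

variable {B : V →ₗ[ℚ] V →ₗ[ℚ] ℚ} {Δ : Set V} {α p : V}

theorem apply_self_pos_of_mem (hpos : ∀ v : V, v ≠ 0 → 0 < B v v) (hRS : IsRootSystem B Δ)
    (hα : α ∈ Δ) : 0 < B α α :=
  hpos α fun h => hRS.2.1 (h ▸ hα)

theorem IsRootSystem.neg_mem (hpos : ∀ v : V, v ≠ 0 → 0 < B v v) (hRS : IsRootSystem B Δ)
    (hα : α ∈ Δ) : -α ∈ Δ := by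
  rw [← reflect_self (apply_self_pos_of_mem hpos hRS hα).ne']
  exact hRS.2.2.2 α hα α hα

theorem IsShort.neg (hpos : ∀ v : V, v ≠ 0 → 0 < B v v) (hRS : IsRootSystem B Δ)
    (hα : IsShort B Δ α) : IsShort B Δ (-α) :=
  ⟨hRS.neg_mem hpos hα.1, by simpa using hα.2⟩

theorem exists_pairings_of_apply_pos (hsymm : ∀ x y : V, B x y = B y x)
    (hpos : ∀ v : V, v ≠ 0 → 0 < B v v) (hRS : IsRootSystem B Δ) (hred : IsReduced Δ)
    (hcrys : IsCrystallographic B Δ) (hα : α ∈ Δ) (hp : p ∈ Δ) (hne : α ≠ p)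
    (hne' : α ≠ -p) (hαp : 0 < B α p) :
    ∃ m n : ℤ, B α (coroot B p) = m ∧ B p (coroot B α) = n ∧ 0 < m ∧ 0 < n ∧ m * n ≤ 3 := by
  have hαα := apply_self_pos_of_mem hpos hRS hα
  have hpp := apply_self_pos_of_mem hpos hRS hp
  -- strict Cauchy–Schwarz, since a reduced root system has no other multiple of `p` than `±p`
  have hCS : B p α * B α p < B p p * B α α := by
    refine (LinearMap.BilinForm.apply_mul_apply_lt_iff_linearIndependent B hpos p α).2 <|
      (LinearIndependent.pair_iff' fun h => hRS.2.1 (h ▸ hp)).2 fun c hc => ?_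
    rcases hred p hp c (hc ▸ hα) with rfl | rfl
    · exact hne (by simpa using hc.symm)
    · exact hne' (by simpa using hc.symm)
  obtain ⟨m, hm⟩ := hcrys p hp α hα
  obtain ⟨n, hn⟩ := hcrys α hα p hp
  simp only [coroot, map_smul, smul_eq_mul, hsymm p α] at hm hn hCS ⊢
  refine ⟨m, n, hm, hn, ?_, ?_, ?_⟩
  · have : (0 : ℚ) < m := hm ▸ by positivity
    exact_mod_cast this
  · have : (0 : ℚ) < n := hn ▸ by positivity
    exact_mod_cast this
  · have : (m : ℚ) * n < 4 := by
      rw [← hm, ← hn, show 2 / B p p * B α p * (2 / B α α * B α p) =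
        4 * (B α p * B α p) / (B p p * B α α) by field_simp; norm_num, div_lt_iff₀ (by positivity)]
      linarith
    have : m * n < 4 := by exact_mod_cast this
    omega

end RootSystem

theorem eq_two_of_mul_eq_mul {a b : ℚ} {m n : ℤ} (ha : 0 < a) (hab : a < b) (hb : b ≤ 2 * a)
    (hm : 0 < m) (hmn : m * n ≤ 3) (h : n * a = m * b) : n = 2 := by
  have hmn' : m < n := by
    have : (m : ℚ) * a < n * a := h ▸ mul_lt_mul_of_pos_left hab (by exact_mod_cast hm)
    exact_mod_cast lt_of_mul_lt_mul_right this ha.le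
  obtain rfl : m = 1 := by nlinarith
  have : (n : ℚ) ≤ 2 := le_of_mul_le_mul_right (by rw [h]; push_cast; linarith) ha
  have : n ≤ 2 := by exact_mod_cast this
  omega

noncomputable def shortSimpleLattice (B : V →ₗ[ℚ] V →ₗ[ℚ] ℚ) (Δ Pi : Set V) : AddSubgroup V :=
  AddSubgroup.closure (coroot B '' (Pi ∩ {β | IsShort B Δ β})) ⊔ (2 : ℚ) • corootLattice B Δ

section ShortSimpleLattice

variable {B : V →ₗ[ℚ] V →ₗ[ℚ] ℚ} {Δ Pi : Set V} {α p : V}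

theorem coroot_mem_shortSimpleLattice (hp : p ∈ Pi) (hsh : IsShort B Δ p) :
    coroot B p ∈ shortSimpleLattice B Δ Pi :=
  (le_sup_left : _ ≤ shortSimpleLattice B Δ Pi) (AddSubgroup.subset_closure ⟨p, ⟨hp, hsh⟩, rfl⟩)

theorem two_smul_coroot_mem_shortSimpleLattice (hp : p ∈ Δ) :
    (2 : ℚ) • coroot B p ∈ shortSimpleLattice B Δ Pi :=
  (le_sup_right : _ ≤ shortSimpleLattice B Δ Pi)
    (Set.smul_mem_smul_set (AddSubgroup.subset_closure ⟨p, hp, rfl⟩))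

theorem coroot_mem_shortSimpleLattice_of_forall_abs_lt (hsymm : ∀ x y : V, B x y = B y x)
    (hpos : ∀ v : V, v ≠ 0 → 0 < B v v) (hRS : IsRootSystem B Δ) (hred : IsReduced Δ)
    (hcrys : IsCrystallographic B Δ) (hbase : IsBase Δ Pi)
    (hd2 : ∀ α ∈ Δ, ∀ β ∈ Δ, B α α ≤ 2 * B β β) {f : V →ₗ[ℚ] ℚ} (hf : ∀ p ∈ Pi, f p = 1)
    (hα : IsShort B Δ α) (hαpos : α ∈ AddSubmonoid.closure Pi)
    (IH : ∀ β, IsShort B Δ β → |f β| < |f α| → coroot B β ∈ shortSimpleLattice B Δ Pi) :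
    coroot B α ∈ shortSimpleLattice B Δ Pi := by
  by_cases hαPi : α ∈ Pi
  · exact coroot_mem_shortSimpleLattice hαPi hα
  have hαα := apply_self_pos_of_mem hpos hRS hα.1
  have hfα : 2 ≤ f α := not_lt.1 fun h =>
    (eq_zero_or_mem_of_mem_closure_of_lt_two hf hαpos h).elim
      (fun h0 => hαα.ne' (by simp [h0])) hαPi
  obtain ⟨p, hpPi, hαp⟩ := exists_pos_of_mem_closure (B α) hαpos hαα
  have hp := hbase.1 hpPi
  have hpp := apply_self_pos_of_mem hpos hRS hp
  obtain ⟨m, n, hm, hn, hm0, hn0, hmn⟩ := exists_pairings_of_apply_pos hsymm hpos hRS hred hcrys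
    hα.1 hp (fun h => hαPi (h ▸ hpPi)) (fun h => by simp [h, hf p hpPi] at hfα; linarith) hαp
  have hβ : IsShort B Δ (reflect B p α) :=
    ⟨hRS.2.2.2 p hp α hα.1, by rw [apply_reflect_reflect hsymm hpp.ne']; exact hα.2⟩
  have hfβ : f (reflect B p α) = f α - m := by simp [reflect, hm, hf p hpPi]
  have hcoroot : coroot B α = coroot B (reflect B p α) + (n : ℤ) • coroot B p := by
    rw [coroot_reflect hsymm hpp.ne', hn, Int.cast_smul_eq_zsmul]
    abel
  rw [hcoroot]
  refine add_mem (IH _ hβ ?_) ?_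
  · have : (1 : ℚ) ≤ m := by exact_mod_cast hm0
    have : (m : ℚ) ≤ 3 := by exact_mod_cast (by nlinarith : m ≤ 3)
    rw [hfβ, abs_of_pos (by linarith : 0 < f α), abs_sub_lt_iff]
    constructor <;> linarith
  by_cases hpsh : IsShort B Δ p
  · exact zsmul_mem (coroot_mem_shortSimpleLattice hpPi hpsh) n
  obtain ⟨γ, hγ, hγp⟩ : ∃ γ ∈ Δ, B γ γ < B p p := by
    simpa [IsShort, hp] using hpsh
  have hn2 : n = 2 := eq_two_of_mul_eq_mul hαα (by linarith [hα.2 γ hγ]) (hd2 p hp α hα.1) hm0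
    hmn (by rw [← hn, ← hm, pairing_mul_apply_self hsymm hαα.ne' hpp.ne'])
  rw [hn2, ← Int.cast_smul_eq_zsmul ℚ]
  exact_mod_cast two_smul_coroot_mem_shortSimpleLattice hp

theorem coroot_mem_shortSimpleLattice_of_isShort (hsymm : ∀ x y : V, B x y = B y x)
    (hpos : ∀ v : V, v ≠ 0 → 0 < B v v) (hRS : IsRootSystem B Δ) (hred : IsReduced Δ)
    (hcrys : IsCrystallographic B Δ) (hbase : IsBase Δ Pi)
    (hd2 : ∀ α ∈ Δ, ∀ β ∈ Δ, B α α ≤ 2 * B β β) (hα : IsShort B Δ α) :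
    coroot B α ∈ shortSimpleLattice B Δ Pi := by
  obtain ⟨f, hf⟩ := exists_linearMap_eq_one_of_linearIndepOn hbase.2.1
  obtain ⟨n, hn⟩ := exists_nat_abs_eq hf (hbase.2.2 α hα.1)
  induction n using Nat.strong_induction_on generalizing α with
  | _ n IH =>
  have IH' : ∀ β, IsShort B Δ β → |f β| < |f α| → coroot B β ∈ shortSimpleLattice B Δ Pi := by
    intro β hβ hlt
    obtain ⟨k, hk⟩ := exists_nat_abs_eq hf (hbase.2.2 β hβ.1)
    exact IH k (by rw [hk, hn] at hlt; exact_mod_cast hlt) hβ hk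
  rcases hbase.2.2 α hα.1 with hαpos | hαneg
  · exact coroot_mem_shortSimpleLattice_of_forall_abs_lt hsymm hpos hRS hred hcrys hbase hd2 hf
      hα hαpos IH'
  · rw [← neg_mem_iff, ← coroot_neg]
    refine coroot_mem_shortSimpleLattice_of_forall_abs_lt hsymm hpos hRS hred hcrys hbase hd2 hf
      (hα.neg hpos hRS) hαneg ?_
    simpa using IH'

end ShortSimpleLattice

theorem statement4_general
    {V : Type*} [AddCommGroup V] [Module ℚ V]
    (B : V →ₗ[ℚ] V →ₗ[ℚ] ℚ)
    (hsymm : ∀ x y : V, B x y = B y x)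
    (hpos : ∀ v : V, v ≠ 0 → 0 < B v v)
    (Δ : Set V) (hRS : IsRootSystem B Δ) (hred : IsReduced Δ)
    (hcrys : IsCrystallographic B Δ)
    (Pi : Set V) (hbase : IsBase Δ Pi)
    (hd2 : ∀ α ∈ Δ, ∀ β ∈ Δ, B α α ≤ 2 * B β β) :
    AddSubgroup.closure (coroot B '' {β | IsShort B Δ β}) ⊔ (2 : ℚ) • corootLattice B Δ =
      AddSubgroup.closure (coroot B '' (Pi ∩ {β | IsShort B Δ β})) ⊔
        (2 : ℚ) • corootLattice B Δ := by
  refine le_antisymm (sup_le ?_ le_sup_right)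
    (sup_le_sup_right (AddSubgroup.closure_mono (Set.image_mono Set.inter_subset_right)) _)
  rw [AddSubgroup.closure_le]
  rintro _ ⟨α, hα, rfl⟩
  exact coroot_mem_shortSimpleLattice_of_isShort hsymm hpos hRS hred hcrys hbase hd2 hα

/-- Assuming `d ≤ 2`, modulo `2Q^∨` the lattice generated by all short coroots is
already generated by the short simple coroots:
`Σ_{α short} ℤα^∨ + 2Q^∨ = Σ_{α ∈ Pi short} ℤα^∨ + 2Q^∨`. -/
theorem statement4
    {V : Type*} [AddCommGroup V] [Module ℚ V] [FiniteDimensional ℚ V]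
    (B : V →ₗ[ℚ] V →ₗ[ℚ] ℚ)
    (hsymm : ∀ x y : V, B x y = B y x)
    (hpos : ∀ v : V, v ≠ 0 → 0 < B v v)
    (Δ : Set V) (hRS : IsRootSystem B Δ) (hred : IsReduced Δ)
    (hcrys : IsCrystallographic B Δ) (hirr : IsIrreducible B Δ)
    (Pi : Set V) (hbase : IsBase Δ Pi)
    (hd2 : ∀ α ∈ Δ, ∀ β ∈ Δ, B α α ≤ 2 * B β β) :
    AddSubgroup.closure (coroot B '' {β | IsShort B Δ β}) ⊔ (2 : ℚ) • corootLattice B Δ =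
      AddSubgroup.closure (coroot B '' (Pi ∩ {β | IsShort B Δ β})) ⊔
        (2 : ℚ) • corootLattice B Δ :=
  statement4_general B hsymm hpos Δ hRS hred hcrys Pi hbase hd2

end ZetaCenter
end

section
/- Assume r > d, set r_α = r / gcd(r, d_α) for α ∈ Δ, let P' = {μ ∈ V : (μ, α^∨) ∈ r_α ℤ for all α ∈ Δ}, and let ρ̃ = (1/2) Σ_{α ∈ Δ⁺} d_α α^∨. Then for every w ∈ W and every λ ∈ P' one has ζ^{(wλ − λ, 2ρ̃)} = 1; in particular the twisted action of W on the group algebra ℂ[2P] given by w ∘ e(2λ) = ζ^{(wλ − λ, 2ρ̃)} e(2wλ) restricts on the subalgebra ℂ[2P'] to the ordinary permutation action w · e(2λ) = e(2wλ). -/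
/-!
For a root reflection `s_α` one has `s_α λ - λ = -(λ, α^∨) α` and `(α, 2ρ̃) = d_α (2ρ, α^∨)`,
where `2ρ` is the sum of the positive roots. The integer `(2ρ, α^∨)` is even: `β ↦ ±s_α β` is an
involution of `Δ⁺` that changes `(β, α^∨)` only by a sign, and by reducedness its fixed points
have `(β, α^∨) ∈ {0, ±2}`. For `λ ∈ P'` we have `(λ, α^∨) ∈ r_α ℤ` and `r_α d_α ∈ r ℤ`, so the
exponent lies in `2r ℤ`, on which `ζ` is trivial because `ζ ^ (2r) = (ζ ^ 2) ^ r = 1`. Reflections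
preserve lengths, hence `d` and `P'`, and `(uvλ - λ, 2ρ̃) = (u(vλ) - vλ, 2ρ̃) + (vλ - λ, 2ρ̃)`,
so the statement passes from the generating reflections to the whole Weyl group.
-/

open scoped Pointwise

namespace ZetaCenter

variable {V : Type*} [AddCommGroup V] [Module ℚ V]

section Reflections

variable {B : V →ₗ[ℚ] V →ₗ[ℚ] ℚ}

lemma apply_coroot (α y : V) : B y (coroot B α) = 2 / B α α * B y α := by
  rw [coroot, map_smul, smul_eq_mul]

lemma apply_coroot_self_s10 {α : V} (hα : B α α ≠ 0) : B α (coroot B α) = 2 := by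
  rw [apply_coroot, div_mul_cancel₀ _ hα]

lemma flip_coroot_apply_self {α : V} (hα : B α α ≠ 0) : B.flip (coroot B α) α = 2 :=
  apply_coroot_self_s10 hα

variable (B) in
noncomputable def rootReflection {α : V} (hα : B α α ≠ 0) : V ≃ₗ[ℚ] V :=
  Module.reflection (flip_coroot_apply_self hα)

variable {α : V} (hα : B α α ≠ 0)
include hα

lemma rootReflection_apply (v : V) : rootReflection B hα v = v - B v (coroot B α) • α :=
  Module.reflection_apply _ _

@[simp]
lemma rootReflection_rootReflection (v : V) : rootReflection B hα (rootReflection B hα v) = v :=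
  Module.involutive_reflection _ v

lemma rootReflection_apply_coroot_self (v : V) :
    B (rootReflection B hα v) (coroot B α) = -B v (coroot B α) := by
  rw [rootReflection_apply, map_sub, map_smul, LinearMap.sub_apply, LinearMap.smul_apply,
    apply_coroot_self_s10 hα, smul_eq_mul]
  ring

variable (hsymm : ∀ x y : V, B x y = B y x)
include hsymm

lemma rootReflection_apply_apply (x y : V) :
    B (rootReflection B hα x) (rootReflection B hα y) = B x y := by
  simp only [rootReflection_apply, map_sub, map_smul, LinearMap.sub_apply, LinearMap.smul_apply,
    smul_eq_mul, apply_coroot]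
  rw [hsymm α y]
  field_simp
  ring

lemma apply_rootReflection_coroot (x y : V) :
    B (rootReflection B hα x) (coroot B y) = B x (coroot B (rootReflection B hα y)) := by
  rw [apply_coroot, apply_coroot, rootReflection_apply_apply hα hsymm,
    ← rootReflection_apply_apply hα hsymm x, rootReflection_rootReflection]

end Reflections

section PositiveRoots

variable {Δ Pi : Set V}

lemma eq_zero_of_mem_closure_of_neg_mem_closure (hli : LinearIndependent ℚ ((↑) : Pi → V))
    {x : V} (hx : x ∈ AddSubmonoid.closure Pi) (hnx : -x ∈ AddSubmonoid.closure Pi) : x = 0 := by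
  have hli' : LinearIndepOn ℚ id Pi := hli
  -- the sum of coordinates in a basis extending `Pi` is at least `1` on nonzero elements
  set φ := (Module.Basis.extend hli').sumCoords
  have hφ : ∀ y ∈ AddSubmonoid.closure Pi, y = 0 ∨ 1 ≤ φ y := by
    intro y hy
    induction hy using AddSubmonoid.closure_induction with
    | mem a ha =>
      right
      have hab : Module.Basis.extend hli' ⟨a, hli'.subset_extend (Set.subset_univ _) ha⟩ = a :=
        Module.Basis.extend_apply_self hli' _
      rw [← hab, Module.Basis.sumCoords_self_apply]
    | zero => exact Or.inl rfl
    | add a b _ _ iha ihb =>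
      rcases iha with rfl | ha
      · rwa [zero_add]
      rcases ihb with rfl | hb
      · rw [add_zero]; exact Or.inr ha
      · right; rw [map_add]; linarith
  rcases hφ x hx with h | h
  · exact h
  rcases hφ (-x) hnx with h' | h'
  · exact neg_eq_zero.mp h'
  · rw [map_neg] at h'; linarith

variable {T : Finset V} (hT : (T : Set V) = positiveRoots Δ Pi)
include hT

lemma mem_or_neg_mem_of_coe_eq_positiveRoots (hbase : IsBase Δ Pi) (hneg : ∀ γ ∈ Δ, -γ ∈ Δ)
    {γ : V} (hγ : γ ∈ Δ) : γ ∈ T ∨ -γ ∈ T := by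
  simp only [← Finset.mem_coe, hT]
  exact (hbase.2.2 γ hγ).imp (fun h => ⟨hγ, h⟩) (fun h => ⟨hneg γ hγ, h⟩)

lemma neg_notMem_of_coe_eq_positiveRoots (hbase : IsBase Δ Pi) (h0 : (0 : V) ∉ Δ) {β : V}
    (hβ : β ∈ T) : -β ∉ T := by
  simp only [← Finset.mem_coe, hT] at hβ ⊢
  exact fun hnβ => h0 (eq_zero_of_mem_closure_of_neg_mem_closure hbase.2.1 hβ.2 hnβ.2 ▸ hβ.1)

end PositiveRoots

lemma even_sum_of_involution {ι : Type*} {s : Finset ι} {f : ι → ℤ} (g : ι → ι)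
    (hg_mem : ∀ a ∈ s, g a ∈ s) (hg_inv : ∀ a ∈ s, g (g a) = a)
    (hpair : ∀ a ∈ s, Even (f a + f (g a))) (hfix : ∀ a ∈ s, g a = a → Even (f a)) :
    Even (∑ a ∈ s, f a) := by
  rw [← ZMod.intCast_eq_zero_iff_even, Int.cast_sum]
  refine Finset.sum_involution (fun a _ => g a) (fun a ha => ?_)
    (fun a ha hfa hga => hfa ?_) hg_mem hg_inv
  · rw [← Int.cast_add, ZMod.intCast_eq_zero_iff_even]
    exact hpair a ha
  · exact ZMod.intCast_eq_zero_iff_even.mpr (hfix a ha hga)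

lemma apply_coroot_eq_two_or_eq_neg_two {B : V →ₗ[ℚ] V →ₗ[ℚ] ℚ} {Δ : Set V} (hred : IsReduced Δ)
    {α β : V} (hα : α ∈ Δ) (hαα : B α α ≠ 0) (hβ : β ∈ Δ) (h : rootReflection B hαα β = -β) :
    B β (coroot B α) = 2 ∨ B β (coroot B α) = -2 := by
  rw [rootReflection_apply] at h
  have hhalf : (B β (coroot B α) / 2) • α = β := by
    rw [div_eq_inv_mul, ← smul_smul]
    linear_combination (norm := module) -(2 : ℚ)⁻¹ • h
  rcases hred α hα _ (hhalf ▸ hβ) with h2 | h2 <;> rw [div_eq_iff two_ne_zero] at h2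
  exacts [Or.inl (by linarith), Or.inr (by linarith)]

section RootSystem

variable {B : V →ₗ[ℚ] V →ₗ[ℚ] ℚ} {Δ : Set V}
  (hrefl : ∀ α ∈ Δ, ∀ β ∈ Δ, β - B β (coroot B α) • α ∈ Δ)
include hrefl

lemma rootReflection_mem {α β : V} (hα : α ∈ Δ) (hαα : B α α ≠ 0) (hβ : β ∈ Δ) :
    rootReflection B hαα β ∈ Δ := by
  rw [rootReflection_apply]
  exact hrefl α hα β hβ

lemma neg_mem_of_mem {α : V} (hα : α ∈ Δ) (hαα : B α α ≠ 0) : -α ∈ Δ := by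
  rw [← Module.reflection_apply_self (flip_coroot_apply_self hαα)]
  exact rootReflection_mem hrefl hα hαα hα

lemma exists_sum_apply_coroot_eq_two_mul (hred : IsReduced Δ) (hcrys : IsCrystallographic B Δ)
    {T : Finset V} (hTΔ : ∀ β ∈ T, β ∈ Δ) (hT : ∀ γ ∈ Δ, γ ∈ T ∨ -γ ∈ T)
    (hTneg : ∀ β ∈ T, -β ∉ T) {α : V} (hα : α ∈ Δ) (hαα : B α α ≠ 0) :
    ∃ K : ℤ, ∑ β ∈ T, B β (coroot B α) = 2 * K := by
  classical
  set s := rootReflection B hαα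
  have hs_neg (v : V) : s (-v) = -s v := map_neg s v
  have hnum : ∀ β ∈ T, ((B β (coroot B α)).num : ℚ) = B β (coroot B α) := fun β hβ => by
    obtain ⟨n, hn⟩ := hcrys α hα β (hTΔ β hβ)
    rw [hn, Rat.num_intCast]
  -- `β ↦ ±s_α β` is an involution of `T`, and `(±s_α β, α^∨) = ±(β, α^∨)`
  have hEven : Even (∑ β ∈ T, (B β (coroot B α)).num) := by
    refine even_sum_of_involution (fun β => if s β ∈ T then s β else -s β) ?_ ?_ ?_ ?_
    · intro β hβ
      split_ifs with h
      · exact h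
      · exact (hT _ (rootReflection_mem hrefl hα hαα (hTΔ β hβ))).resolve_left h
    · intro β hβ
      by_cases h : s β ∈ T
      · simp [h, s, hβ]
      · simp [h, s, hs_neg, hTneg β hβ]
    · intro β hβ
      split_ifs <;> simp [s, rootReflection_apply_coroot_self]
    · intro β hβ hfix
      by_cases h : s β ∈ T
      · rw [if_pos h] at hfix
        have h0 : B β (coroot B α) = 0 := by
          have := rootReflection_apply_coroot_self hαα β
          rw [show rootReflection B hαα β = β from hfix] at this
          linarith
        simp [h0]
      · rw [if_neg h, neg_eq_iff_eq_neg] at hfix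
        rcases apply_coroot_eq_two_or_eq_neg_two hred hα hαα (hTΔ β hβ) hfix with h2 | h2 <;>
          simp [h2]
  obtain ⟨K, hK⟩ := hEven
  refine ⟨K, ?_⟩
  rw [← Finset.sum_congr rfl hnum, ← Int.cast_sum, hK]
  push_cast
  ring

end RootSystem

lemma exists_apply_self_eq_mul {B : V →ₗ[ℚ] V →ₗ[ℚ] ℚ} {Δ : Set V} (hfin : Δ.Finite)
    (hne : Δ.Nonempty) (hpos : ∀ v ∈ Δ, 0 < B v v) {d : V → ℕ}
    (hd : ∀ α ∈ Δ, ∀ β : V, IsShort B Δ β → B α α = (d α : ℚ) * B β β) :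
    ∃ b : ℚ, b ≠ 0 ∧ ∀ α ∈ Δ, B α α = d α * b := by
  obtain ⟨β, hβ, hmin⟩ := Set.exists_min_image Δ (fun γ => B γ γ) hfin hne
  exact ⟨B β β, (hpos β hβ).ne', fun α hα => hd α hα β ⟨hβ, hmin⟩⟩

lemma apply_sum_smul_coroot {B : V →ₗ[ℚ] V →ₗ[ℚ] ℚ} (hsymm : ∀ x y : V, B x y = B y x)
    {Δ : Set V} (hΔ : ∀ β ∈ Δ, B β β ≠ 0) {d : V → ℕ} {b : ℚ}
    (hd : ∀ β ∈ Δ, B β β = d β * b) {T : Finset V} (hTΔ : ∀ β ∈ T, β ∈ Δ) {α : V}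
    (hα : α ∈ Δ) :
    B α (∑ β ∈ T, (d β : ℚ) • coroot B β) = d α * ∑ β ∈ T, B β (coroot B α) := by
  rw [map_sum, Finset.mul_sum]
  refine Finset.sum_congr rfl fun β hβ => ?_
  obtain ⟨hdα, hb⟩ := mul_ne_zero_iff.mp (hd α hα ▸ hΔ α hα)
  have hdβ := (mul_ne_zero_iff.mp (hd β (hTΔ β hβ) ▸ hΔ β (hTΔ β hβ))).1
  rw [map_smul, smul_eq_mul, apply_coroot, apply_coroot, hsymm β α, hd α hα, hd β (hTΔ β hβ)]
  field_simp

lemma rootReflection_mem_scaledWeightLattice {B : V →ₗ[ℚ] V →ₗ[ℚ] ℚ}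
    (hsymm : ∀ x y : V, B x y = B y x) {Δ : Set V}
    (hrefl : ∀ α ∈ Δ, ∀ β ∈ Δ, β - B β (coroot B α) • α ∈ Δ) {α : V} (hα : α ∈ Δ)
    (hαα : B α α ≠ 0) {c : V → ℚ} (hc : ∀ β ∈ Δ, c (rootReflection B hαα β) = c β) {lam : V}
    (hlam : lam ∈ scaledWeightLattice B Δ c) :
    rootReflection B hαα lam ∈ scaledWeightLattice B Δ c := by
  intro β hβ
  obtain ⟨n, hn⟩ := hlam _ (rootReflection_mem hrefl hα hαα hβ)
  exact ⟨n, by rw [apply_rootReflection_coroot hαα hsymm, hn, hc β hβ]⟩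

lemma div_gcd_mul_eq_mul_div_gcd (r d : ℕ) : r / r.gcd d * d = r * (d / r.gcd d) := by
  rw [Nat.div_mul_right_comm (Nat.gcd_dvd_left r d), Nat.mul_div_assoc _ (Nat.gcd_dvd_right r d)]

/-- Automorphisms `u` preserving `L` whose twist `ζ ^ f (u x - x)` is trivial on `L`; the
subgroup `H` stands for the exponents `n` with `ζ ^ n = 1`. -/
def twistFreeStabilizer (L : AddSubgroup V) (f : V →ₗ[ℚ] ℚ) (H : AddSubgroup ℚ) :
    Submonoid (V ≃ₗ[ℚ] V) where
  carrier := {u | ∀ x ∈ L, u x ∈ L ∧ f (u x - x) ∈ H}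
  one_mem' x hx := ⟨hx, by simp⟩
  mul_mem' {u v} hu hv x hx := by
    obtain ⟨hvx, hv⟩ := hv x hx
    obtain ⟨huvx, hu⟩ := hu (v x) hvx
    refine ⟨huvx, ?_⟩
    rw [show (u * v) x - x = (u (v x) - v x) + (v x - x) by simp, map_add]
    exact H.add_mem hu hv

section WeylGroup

variable {B : V →ₗ[ℚ] V →ₗ[ℚ] ℚ} (hsymm : ∀ x y : V, B x y = B y x)
  (hpos : ∀ v : V, v ≠ 0 → 0 < B v v) {Δ : Set V} (hRS : IsRootSystem B Δ)
  (hred : IsReduced Δ) (hcrys : IsCrystallographic B Δ) {Pi : Set V} (hbase : IsBase Δ Pi)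
  {d_ : V → ℕ} (hd : ∀ α ∈ Δ, ∀ β : V, IsShort B Δ β → B α α = (d_ α : ℚ) * B β β)
  (r : ℕ) {T : Finset V} (hT : (T : Set V) = positiveRoots Δ Pi)
include hsymm hpos hRS hred hcrys hbase hd hT

lemma rootReflection_mem_twistFreeStabilizer {α : V} (hα : α ∈ Δ) (hαα : B α α ≠ 0) :
    rootReflection B hαα ∈ twistFreeStabilizer
      (scaledWeightLattice B Δ fun β => ((r / r.gcd (d_ β) : ℕ) : ℚ))
      (B.flip (∑ β ∈ T, (d_ β : ℚ) • coroot B β)) (AddSubgroup.zmultiples ((2 * r : ℕ) : ℚ)) := by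
  obtain ⟨hfin, h0, -, hrefl⟩ := hRS
  have hΔpos : ∀ β ∈ Δ, 0 < B β β := fun β hβ => hpos β (ne_of_mem_of_not_mem hβ h0)
  have hΔ : ∀ β ∈ Δ, B β β ≠ 0 := fun β hβ => (hΔpos β hβ).ne'
  obtain ⟨b, hb, hnorm⟩ := exists_apply_self_eq_mul hfin ⟨α, hα⟩ hΔpos hd
  have hTΔ : ∀ β ∈ T, β ∈ Δ := fun β hβ => (hT ▸ Finset.mem_coe.mpr hβ : β ∈ positiveRoots Δ Pi).1
  have hTor : ∀ γ ∈ Δ, γ ∈ T ∨ -γ ∈ T := fun γ =>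
    mem_or_neg_mem_of_coe_eq_positiveRoots hT hbase fun γ hγ => neg_mem_of_mem hrefl hγ (hΔ γ hγ)
  have hTneg : ∀ β ∈ T, -β ∉ T := fun β => neg_notMem_of_coe_eq_positiveRoots hT hbase h0
  intro lam hlam
  refine ⟨rootReflection_mem_scaledWeightLattice hsymm hrefl hα hαα (fun β hβ => ?_) hlam, ?_⟩
  · have hdb : (d_ (rootReflection B hαα β) : ℚ) * b = d_ β * b := by
      rw [← hnorm _ (rootReflection_mem hrefl hα hαα hβ), ← hnorm β hβ,
        rootReflection_apply_apply hαα hsymm]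
    rw [Nat.cast_inj.mp (mul_right_cancel₀ hb hdb)]
  · obtain ⟨m, hm⟩ := hlam α hα
    obtain ⟨K, hK⟩ := exists_sum_apply_coroot_eq_two_mul hrefl hred hcrys hTΔ hTor hTneg hα hαα
    have hdiv : ((r / r.gcd (d_ α) : ℕ) : ℚ) * d_ α = r * (d_ α / r.gcd (d_ α) : ℕ) := by
      exact_mod_cast div_gcd_mul_eq_mul_div_gcd r (d_ α)
    refine ⟨-(m * K * (d_ α / r.gcd (d_ α) : ℕ)), ?_⟩
    rw [LinearMap.flip_apply, rootReflection_apply, sub_sub_cancel_left, map_neg,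
      LinearMap.neg_apply, map_smul, LinearMap.smul_apply,
      apply_sum_smul_coroot hsymm hΔ hnorm hTΔ hα, hK, hm, smul_eq_mul]
    simp only [zsmul_eq_mul, Int.cast_neg, Int.cast_mul, Int.cast_natCast, Nat.cast_mul,
      Nat.cast_ofNat]
    linear_combination (2 * m * K) * hdiv

lemma weylGroup_le_twistFreeStabilizer :
    (weylGroup B Δ).toSubmonoid ≤ twistFreeStabilizer
      (scaledWeightLattice B Δ fun β => ((r / r.gcd (d_ β) : ℕ) : ℚ))
      (B.flip (∑ β ∈ T, (d_ β : ℚ) • coroot B β)) (AddSubgroup.zmultiples ((2 * r : ℕ) : ℚ)) := by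
  set M := twistFreeStabilizer (scaledWeightLattice B Δ fun β => ((r / r.gcd (d_ β) : ℕ) : ℚ))
    (B.flip (∑ β ∈ T, (d_ β : ℚ) • coroot B β)) (AddSubgroup.zmultiples ((2 * r : ℕ) : ℚ))
  have hgen : ∀ u ∈ {w : V ≃ₗ[ℚ] V | ∃ α ∈ Δ, ∀ v : V, w v = v - B v (coroot B α) • α},
      u ∈ M ∧ u⁻¹ = u := by
    rintro u ⟨α, hα, hu⟩
    have hαα : B α α ≠ 0 := (hpos α (ne_of_mem_of_not_mem hα hRS.2.1)).ne'
    obtain rfl : u = rootReflection B hαα :=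
      LinearEquiv.ext fun v => (hu v).trans (rootReflection_apply hαα v).symm
    exact ⟨rootReflection_mem_twistFreeStabilizer hsymm hpos hRS hred hcrys hbase hd r hT hα hαα,
      Module.reflection_inv _⟩
  intro w (hw : w ∈ Subgroup.closure _)
  induction hw using Subgroup.closure_induction'' with
  | mem u hu => exact (hgen u hu).1
  | inv_mem u hu => exact (hgen u hu).2 ▸ (hgen u hu).1
  | one => exact one_mem _
  | mul u v _ _ hu hv => exact mul_mem hu hv

end WeylGroup

theorem statement10_general
    {V : Type*} [AddCommGroup V] [Module ℚ V]
    (B : V →ₗ[ℚ] V →ₗ[ℚ] ℚ)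
    (hsymm : ∀ x y : V, B x y = B y x)
    (hpos : ∀ v : V, v ≠ 0 → 0 < B v v)
    (Δ : Set V) (hRS : IsRootSystem B Δ) (hred : IsReduced Δ)
    (hcrys : IsCrystallographic B Δ)
    (Pi : Set V) (hbase : IsBase Δ Pi)
    (d_ : V → ℕ)
    (hd : ∀ α ∈ Δ, ∀ β : V, IsShort B Δ β → B α α = (d_ α : ℚ) * B β β)
    (ζ : ℂ)
    (r : ℕ) (hr : r = orderOf (ζ ^ 2))
    (T : Finset V) (hT : (T : Set V) = positiveRoots Δ Pi)
    (ρt : V) (hρ : ρt = (2⁻¹ : ℚ) • ∑ α ∈ T, (d_ α : ℚ) • coroot B α) :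
    ∀ w ∈ weylGroup B Δ,
      ∀ lam ∈ scaledWeightLattice B Δ (fun α => ((r / Nat.gcd r (d_ α) : ℕ) : ℚ)),
        ∃ n : ℤ, B (w lam - lam) ((2 : ℚ) • ρt) = n ∧ ζ ^ n = 1 := by
  intro w hw lam hlam
  obtain ⟨-, k, hk⟩ :=
    weylGroup_le_twistFreeStabilizer hsymm hpos hRS hred hcrys hbase hd r hT hw lam hlam
  refine ⟨(2 * r : ℕ) * k, ?_, ?_⟩
  · rw [hρ, smul_smul, mul_inv_cancel₀ two_ne_zero, one_smul, ← LinearMap.flip_apply, ← hk]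
    push_cast [zsmul_eq_mul]
    ring
  · rw [zpow_mul, zpow_natCast, pow_mul, hr, pow_orderOf_eq_one, one_zpow]

/-- Assume `r > d` and set `r_α = r / gcd(r, d_α)`,
`P' = {μ : (μ, α^∨) ∈ r_α ℤ for all α}`, `ρ̃ = ½ Σ_{α ∈ Δ⁺} d_α α^∨`.  Then for every `w ∈ W`
and `λ ∈ P'` the pairing `(wλ - λ, 2ρ̃)` is an integer `n` with `ζ^n = 1`; in particular the
twisted `W`-action `w ∘ e(2λ) = ζ^{(wλ-λ,2ρ̃)} e(2wλ)` on `ℂ[2P]` restricts on `ℂ[2P']` to the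
ordinary permutation action. -/
theorem statement10
    {V : Type*} [AddCommGroup V] [Module ℚ V] [FiniteDimensional ℚ V]
    (B : V →ₗ[ℚ] V →ₗ[ℚ] ℚ)
    (hsymm : ∀ x y : V, B x y = B y x)
    (hpos : ∀ v : V, v ≠ 0 → 0 < B v v)
    (Δ : Set V) (hRS : IsRootSystem B Δ) (hred : IsReduced Δ)
    (hcrys : IsCrystallographic B Δ) (hirr : IsIrreducible B Δ)
    (Pi : Set V) (hbase : IsBase Δ Pi)
    (d_ : V → ℕ)
    (hd : ∀ α ∈ Δ, ∀ β : V, IsShort B Δ β → B α α = (d_ α : ℚ) * B β β)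
    (ℓ : ℕ) (hℓ : 0 < ℓ) (ζ : ℂ) (hζ : IsPrimitiveRoot ζ ℓ)
    (r : ℕ) (hr : r = orderOf (ζ ^ 2))
    (hrd : ∀ α ∈ Δ, d_ α < r)
    (T : Finset V) (hT : (T : Set V) = positiveRoots Δ Pi)
    (ρt : V) (hρ : ρt = (2⁻¹ : ℚ) • ∑ α ∈ T, (d_ α : ℚ) • coroot B α) :
    ∀ w ∈ weylGroup B Δ,
      ∀ lam ∈ scaledWeightLattice B Δ (fun α => ((r / Nat.gcd r (d_ α) : ℕ) : ℚ)),
        ∃ n : ℤ, B (w lam - lam) ((2 : ℚ) • ρt) = n ∧ ζ ^ n = 1 :=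
  statement10_general B hsymm hpos Δ hRS hred hcrys Pi hbase d_ hd ζ r hr T hT ρt hρ

end ZetaCenter
end
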